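/- arXiv:2009.07647 — 5 statements merged into one kernel-verified Lean document; each statement's English description precedes it below -/
import Mathlib

section
/- For all real a ≥ b > 0 and all t ∈ ℝ, the triangle T(t) of the homothetic Poncelet family satisfies s₁(t)² + s₂(t)² + s₃(t)² = (9/2)·(a² + b²), where s₁(t), s₂(t), s₃(t) are its sidelengths. In particular, the sum of squared sidelengths is independent of t. -/
open Real

/-- A point of the Euclidean plane `ℝ²`. -/
noncomputable def pt (x y : ℝ) : EuclideanSpace ℝ (Fin 2) := WithLp.toLp 2 ![x, y]

/-- Vertex `k` of the triangle `T(t)` of the homothetic Poncelet family. -/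
noncomputable def homP (a b t : ℝ) (k : ℕ) : EuclideanSpace ℝ (Fin 2) :=
  pt (a * Real.cos (t + 2 * π * k / 3)) (b * Real.sin (t + 2 * π * k / 3))

/-!
The vertices sit at parameters `t`, `t + 2π/3`, `t + 4π/3`, so their centroid is the centre of
the ellipse, and the identity
`|B - C|² + |C - A|² + |A - B|² = 3 (|A|² + |B|² + |C|²) - |A + B + C|²`
reduces the claim to `∑ₖ |Pₖ|² = a² ∑ₖ cos² + b² ∑ₖ sin² = (3/2)(a² + b²)`.
-/

theorem dist_sq_add_dist_sq_add_dist_sq {E : Type*} [NormedAddCommGroup E]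
    [InnerProductSpace ℝ E] (x y z : E) :
    dist y z ^ 2 + dist z x ^ 2 + dist x y ^ 2 =
      3 * (‖x‖ ^ 2 + ‖y‖ ^ 2 + ‖z‖ ^ 2) - ‖x + y + z‖ ^ 2 := by
  simp only [dist_eq_norm, norm_sub_sq_real, norm_add_sq_real, inner_add_left,
    real_inner_comm x z]
  ring

theorem norm_pt_sq (x y : ℝ) : ‖pt x y‖ ^ 2 = x ^ 2 + y ^ 2 := by
  simp [pt, EuclideanSpace.real_norm_sq_eq, Fin.sum_univ_two]

theorem pt_add_pt (x y x' y' : ℝ) : pt x y + pt x' y' = pt (x + x') (y + y') := by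
  ext i; fin_cases i <;> simp [pt]

theorem pt_zero_zero : pt 0 0 = 0 := by
  ext i; fin_cases i <;> simp [pt]

theorem cos_add_two_pi_div_three (t : ℝ) :
    cos (t + 2 * π / 3) = -cos t / 2 - √3 / 2 * sin t := by
  rw [cos_add, show 2 * π / 3 = π - π / 3 by ring, cos_pi_sub, sin_pi_sub,
    cos_pi_div_three, sin_pi_div_three]
  ring

theorem sin_add_two_pi_div_three (t : ℝ) :
    sin (t + 2 * π / 3) = -sin t / 2 + √3 / 2 * cos t := by
  rw [sin_add, show 2 * π / 3 = π - π / 3 by ring, cos_pi_sub, sin_pi_sub,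
    cos_pi_div_three, sin_pi_div_three]
  ring

theorem cos_add_four_pi_div_three (t : ℝ) :
    cos (t + 4 * π / 3) = -cos t / 2 + √3 / 2 * sin t := by
  rw [show t + 4 * π / 3 = t + 2 * π / 3 + 2 * π / 3 by ring,
    cos_add_two_pi_div_three (t + 2 * π / 3), cos_add_two_pi_div_three t,
    sin_add_two_pi_div_three t]
  linear_combination (-cos t / 4) * sq_sqrt (show (0 : ℝ) ≤ 3 by norm_num)

theorem sin_add_four_pi_div_three (t : ℝ) :
    sin (t + 4 * π / 3) = -sin t / 2 - √3 / 2 * cos t := by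
  rw [show t + 4 * π / 3 = t + 2 * π / 3 + 2 * π / 3 by ring,
    sin_add_two_pi_div_three (t + 2 * π / 3), cos_add_two_pi_div_three t,
    sin_add_two_pi_div_three t]
  linear_combination (-sin t / 4) * sq_sqrt (show (0 : ℝ) ≤ 3 by norm_num)

section

variable (a b t : ℝ)

theorem homP_zero : homP a b t 0 = pt (a * cos t) (b * sin t) := by
  simp [homP]

theorem homP_one : homP a b t 1 =
    pt (a * (-cos t / 2 - √3 / 2 * sin t)) (b * (-sin t / 2 + √3 / 2 * cos t)) := by
  rw [homP, Nat.cast_one, mul_one, cos_add_two_pi_div_three, sin_add_two_pi_div_three]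

theorem homP_two : homP a b t 2 =
    pt (a * (-cos t / 2 + √3 / 2 * sin t)) (b * (-sin t / 2 - √3 / 2 * cos t)) := by
  rw [homP, show t + 2 * π * ((2 : ℕ) : ℝ) / 3 = t + 4 * π / 3 by push_cast; ring,
    cos_add_four_pi_div_three, sin_add_four_pi_div_three]

theorem homP_zero_add_homP_one_add_homP_two :
    homP a b t 0 + homP a b t 1 + homP a b t 2 = 0 := by
  rw [homP_zero, homP_one, homP_two, pt_add_pt, pt_add_pt, ← pt_zero_zero]
  congr 1 <;> ring

theorem norm_homP_sq_sum :
    ‖homP a b t 0‖ ^ 2 + ‖homP a b t 1‖ ^ 2 + ‖homP a b t 2‖ ^ 2 = 3 / 2 * (a ^ 2 + b ^ 2) := by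
  rw [homP_zero, homP_one, homP_two, norm_pt_sq, norm_pt_sq, norm_pt_sq]
  linear_combination (a ^ 2 * sin t ^ 2 + b ^ 2 * cos t ^ 2) / 2 *
      sq_sqrt (show (0 : ℝ) ≤ 3 by norm_num) + 3 / 2 * (a ^ 2 + b ^ 2) * cos_sq_add_sin_sq t

end

theorem homothetic_sum_sq_sidelengths_invariant_general (a b : ℝ) (t : ℝ) :
    dist (homP a b t 1) (homP a b t 2) ^ 2 +
    dist (homP a b t 2) (homP a b t 0) ^ 2 +
    dist (homP a b t 0) (homP a b t 1) ^ 2 = (9 / 2) * (a ^ 2 + b ^ 2) := by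
  rw [dist_sq_add_dist_sq_add_dist_sq, norm_homP_sq_sum, homP_zero_add_homP_one_add_homP_two,
    norm_zero]
  ring

/-- The triangles of the homothetic Poncelet family all have sum of squared sidelengths
equal to `(9/2)·(a² + b²)`, independently of `t`. -/
theorem homothetic_sum_sq_sidelengths_invariant (a b : ℝ) (hab : a ≥ b) (hb : 0 < b) (t : ℝ) :
    dist (homP a b t 1) (homP a b t 2) ^ 2 +
    dist (homP a b t 2) (homP a b t 0) ^ 2 +
    dist (homP a b t 0) (homP a b t 1) ^ 2 = (9 / 2) * (a ^ 2 + b ^ 2) :=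
  homothetic_sum_sq_sidelengths_invariant_general a b t
end

section
/- For all real a, b > 0, all t ∈ ℝ and each k ∈ {0, 1, 2}, the line through the consecutive vertices P_k(t) and P_{k+1}(t) (indices mod 3) of the triangle T(t) of the homothetic Poncelet family intersects the ellipse E(a/2, b/2) in exactly one point, namely the side midpoint (P_k(t) + P_{k+1}(t))/2. Hence every T(t) is inscribed in E(a, b) and circumscribes the concentric half-sized ellipse E(a/2, b/2). -/
/-! The map `(x, y) ↦ (a x, b y)` carries the unit circle onto `E(a, b)` and the family to
equilateral triangles inscribed in it. Measured with the polar form `⟨z, w⟩` of the quadratic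
form defining `E(a, b)`, consecutive vertices satisfy `⟨A, A⟩ = ⟨B, B⟩ = 1` and
`⟨A, B⟩ = cos (2π/3) = -1/2`, so the point `z = (1 - r) A + r B` of the side `AB` has
`⟨z, z⟩ = (1 - r)² - r (1 - r) + r² = 1/4 + 3 (r - 1/2)²`. It lies on `E(a/2, b/2)`, where
`⟨z, z⟩ = 1/4`, only at the midpoint `r = 1/2`. -/

open Real

/-- The ellipse with semi-axes `p, q` centered at the origin. -/
def ellipse (p q : ℝ) : Set (EuclideanSpace ℝ (Fin 2)) :=
  {z | z 0 ^ 2 / p ^ 2 + z 1 ^ 2 / q ^ 2 = 1}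

/-- The line through two points, as a subset of the plane. -/
noncomputable def lineThrough (A B : EuclideanSpace ℝ (Fin 2)) :
    Set (EuclideanSpace ℝ (Fin 2)) :=
  (affineSpan ℝ {A, B} : AffineSubspace ℝ (EuclideanSpace ℝ (Fin 2)))

noncomputable def ellipsePairing (p q : ℝ) (z w : EuclideanSpace ℝ (Fin 2)) : ℝ :=
  z 0 * w 0 / p ^ 2 + z 1 * w 1 / q ^ 2

lemma mem_ellipse_iff_ellipsePairing {p q : ℝ} {z : EuclideanSpace ℝ (Fin 2)} :
    z ∈ ellipse p q ↔ ellipsePairing p q z z = 1 := by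
  simp only [ellipse, ellipsePairing, Set.mem_ofPred_eq, sq]

lemma ellipsePairing_half (p q : ℝ) (z w : EuclideanSpace ℝ (Fin 2)) :
    ellipsePairing (p / 2) (q / 2) z w = 4 * ellipsePairing p q z w := by
  simp only [ellipsePairing]
  ring

lemma ellipsePairing_lineMap_self (p q : ℝ) (A B : EuclideanSpace ℝ (Fin 2)) (r : ℝ) :
    ellipsePairing p q (AffineMap.lineMap A B r) (AffineMap.lineMap A B r) =
      (1 - r) ^ 2 * ellipsePairing p q A A + 2 * r * (1 - r) * ellipsePairing p q A B +
        r ^ 2 * ellipsePairing p q B B := by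
  simp only [ellipsePairing, AffineMap.lineMap_apply_module, PiLp.add_apply, PiLp.smul_apply,
    smul_eq_mul]
  ring

lemma lineMap_mem_ellipse_half_iff {p q : ℝ} {A B : EuclideanSpace ℝ (Fin 2)}
    (hA : A ∈ ellipse p q) (hB : B ∈ ellipse p q) (hAB : ellipsePairing p q A B = -1 / 2)
    (r : ℝ) : AffineMap.lineMap A B r ∈ ellipse (p / 2) (q / 2) ↔ r = 1 / 2 := by
  rw [mem_ellipse_iff_ellipsePairing] at hA hB ⊢
  rw [ellipsePairing_half, ellipsePairing_lineMap_self, hA, hB, hAB]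
  constructor
  · intro h
    nlinarith [sq_nonneg (2 * r - 1)]
  · rintro rfl
    norm_num

theorem lineThrough_inter_ellipse_half_eq_midpoint {p q : ℝ} {A B : EuclideanSpace ℝ (Fin 2)}
    (hA : A ∈ ellipse p q) (hB : B ∈ ellipse p q) (hAB : ellipsePairing p q A B = -1 / 2) :
    lineThrough A B ∩ ellipse (p / 2) (q / 2) = {midpoint ℝ A B} := by
  have hmem := lineMap_mem_ellipse_half_iff hA hB hAB
  ext z
  simp only [lineThrough, SetLike.mem_coe, mem_affineSpan_pair_iff_exists_lineMap_eq,
    Set.mem_inter_iff, Set.mem_singleton_iff]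
  constructor
  · rintro ⟨⟨r, rfl⟩, hz⟩
    rw [(hmem r).mp hz, ← lineMap_one_half]
  · rintro rfl
    rw [← lineMap_one_half]
    exact ⟨⟨1 / 2, rfl⟩, (hmem _).mpr rfl⟩

lemma ellipsePairing_homP {a b : ℝ} (ha : a ≠ 0) (hb : b ≠ 0) (t : ℝ) (j k : ℕ) :
    ellipsePairing a b (homP a b t j) (homP a b t k) = cos (2 * π * ((j : ℝ) - k) / 3) := by
  rw [show 2 * π * ((j : ℝ) - k) / 3 = (t + 2 * π * j / 3) - (t + 2 * π * k / 3) by ring,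
    cos_sub]
  simp only [ellipsePairing, homP, pt, PiLp.toLp_apply, Matrix.cons_val_zero,
    Matrix.cons_val_one]
  field_simp

/-- Every triangle of the homothetic Poncelet family is inscribed in `E(a,b)`, and
each of its sidelines meets the concentric half-sized ellipse `E(a/2, b/2)` in exactly
one point, namely the corresponding side midpoint; hence the triangle circumscribes
`E(a/2, b/2)`. -/
theorem homothetic_poncelet_inscribed_circumscribed (a b : ℝ) (ha : 0 < a) (hb : 0 < b)
    (t : ℝ) :
    (∀ k < 3, homP a b t k ∈ ellipse a b) ∧
    (∀ k < 3, lineThrough (homP a b t k) (homP a b t (k + 1)) ∩ ellipse (a / 2) (b / 2) =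
      {midpoint ℝ (homP a b t k) (homP a b t (k + 1))}) := by
  have hpair := ellipsePairing_homP ha.ne' hb.ne' t
  have hon (k : ℕ) : homP a b t k ∈ ellipse a b := by
    rw [mem_ellipse_iff_ellipsePairing, hpair, sub_self, mul_zero, zero_div, cos_zero]
  refine ⟨fun k _ ↦ hon k, fun k _ ↦ ?_⟩
  refine lineThrough_inter_ellipse_half_eq_midpoint (hon k) (hon (k + 1)) ?_
  rw [hpair, show 2 * π * ((k : ℝ) - ↑(k + 1)) / 3 = -(π - π / 3) by push_cast; ring,
    cos_neg, cos_pi_sub, cos_pi_div_three]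
  norm_num
end

section
/- Let a > b > 0, R = 2a²/b, c = √(a² − b²), and let ω ∈ (0, π/2) satisfy cot ω = √(4a² − b²)/b. Then 4·sin²ω ≤ 1 and c = R·sin ω·√(1 − 4·sin²ω). Equivalently, the squared distance 4c² between the two stationary Brocard points equals 4R²·sin²ω·(1 − 4·sin²ω). -/
open Real

/-! From `1 + cot² ω = 1 / sin² ω` and `sin ω > 0` the Brocard angle satisfies
`sin ω = b / (2a)`. Then `R sin ω = a` and `1 - 4 sin² ω = (a² - b²) / a²`, so
`R sin ω √(1 - 4 sin² ω) = √(a² - b²) = c`. -/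

namespace Real

theorem inv_sqrt_one_add_cot_sq {x : ℝ} (hx : 0 < sin x) : (√(1 + cot x ^ 2))⁻¹ = sin x := by
  have h : 1 + cot x ^ 2 = (sin x)⁻¹ ^ 2 := by
    rw [cot_eq_cos_div_sin]
    field_simp
    linarith [sin_sq_add_cos_sq x]
  rw [h, sqrt_sq (inv_nonneg.mpr hx.le), inv_inv]

end Real

theorem sin_brocard_angle {a b ω : ℝ} (ha : 0 < a) (hb : 0 < b) (hba : b ≤ 2 * a)
    (hsin : 0 < sin ω) (hcot : cot ω = √(4 * a ^ 2 - b ^ 2) / b) : sin ω = b / (2 * a) := by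
  have hcsc : 1 + (√(4 * a ^ 2 - b ^ 2) / b) ^ 2 = (2 * a / b) ^ 2 := by
    rw [div_pow, sq_sqrt (by nlinarith)]
    field_simp
    ring
  rw [← inv_sqrt_one_add_cot_sq hsin, hcot, hcsc, sqrt_sq (by positivity), inv_div]

theorem four_mul_sq_div_two_mul_le_one {a b : ℝ} (ha : 0 < a) (hb : 0 ≤ b) (hba : b ≤ a) :
    4 * (b / (2 * a)) ^ 2 ≤ 1 := by
  rw [div_pow, mul_div_assoc', div_le_one (by positivity)]
  nlinarith

theorem sqrt_sq_sub_sq_eq {a b : ℝ} (ha : 0 < a) (hb : b ≠ 0) :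
    √(a ^ 2 - b ^ 2) = 2 * a ^ 2 / b * (b / (2 * a)) * √(1 - 4 * (b / (2 * a)) ^ 2) := by
  have h : 1 - 4 * (b / (2 * a)) ^ 2 = (a ^ 2 - b ^ 2) / a ^ 2 := by
    field_simp
    ring
  rw [h, sqrt_div' _ (sq_nonneg a), sqrt_sq ha.le]
  field_simp

/-- In the Brocard porism with inellipse `E(a,b)`, circumradius `R = 2a²/b` and
Brocard angle `ω` (so `cot ω = √(4a² − b²)/b`), the half-distance `c = √(a² − b²)`
between the two stationary Brocard points satisfies
`c = R·sin ω·√(1 − 4 sin² ω)`; in particular `4 sin² ω ≤ 1`. -/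
theorem brocard_distance_formula (a b c R ω : ℝ) (hab : a > b) (hb : 0 < b)
    (hc : c = Real.sqrt (a ^ 2 - b ^ 2)) (hR : R = 2 * a ^ 2 / b)
    (hω : ω ∈ Set.Ioo 0 (π / 2))
    (hcot : Real.cot ω = Real.sqrt (4 * a ^ 2 - b ^ 2) / b) :
    4 * Real.sin ω ^ 2 ≤ 1 ∧
    c = R * Real.sin ω * Real.sqrt (1 - 4 * Real.sin ω ^ 2) := by
  have ha : 0 < a := hb.trans hab
  have hsin : 0 < sin ω := sin_pos_of_pos_of_lt_pi hω.1 (by linarith [hω.2, pi_pos])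
  rw [sin_brocard_angle ha hb (by linarith) hsin hcot, hc, hR]
  exact ⟨four_mul_sq_div_two_mul_le_one ha hb.le hab.le, sqrt_sq_sub_sq_eq ha hb.ne'⟩
end

section
/- Let a > b > 0, c = √(a² − b²), δ₁ = √(4a² − b²), O = (0, −c·δ₁/b) and R = 2a²/b. Let A, B, C ∈ ℝ² be noncollinear, each at distance R from O, with each of the three sidelines AB, BC, CA tangent to E(a, b), and let G = (A + B + C)/3 be the centroid. If u, v ∈ ℝ² are orthonormal vectors and p ≥ q > 0 are such that A, B, C all lie on the ellipse {x ∈ ℝ² : ⟨x − G, u⟩²/p² + ⟨x − G, v⟩²/q² = 1} (the Steiner circumellipse, with semi-axes p, q), then p²/q² = (8a² − 5b² + 4√(4a⁴ − 5a²b² + b⁴))/(3b²); in particular the aspect ratio of the Steiner circumellipse is the same for every triangle of the Brocard-porism family. -/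
/-
Put `W = cross (B - A) (C - A)` (twice the signed area) and `S = |AB|² + |BC|² + |CA|²`, so that the
Brocard angle `ω` of `ABC` has `cot ω = S / (2|W|)`. Writing the circumcircle and the tangency of
the three sidelines as polynomial equations in the coordinates of the vertices, an explicit
ideal-membership certificate gives `b² S² = 4 δ₁² W²`: every triangle of the porism has
`cot ω = δ₁ / b`. On the other hand, in the frame `(u / p, v / q)` the vectors `A - G, B - G, C - G`
become three unit vectors summing to zero, i.e. at mutual angles `2π/3`, whence
`S = 9 (p² + q²) / 2` and `W² = 27 p² q² / 4`. Substituting gives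
`3 b² (p² + q²)² = 4 δ₁² p² q²`, a quadratic in `p² / q²` with reciprocal roots; the root `≥ 1` is
the stated one.
-/

open Real RealInnerProductSpace

/-- A line is tangent to a conic if they intersect in exactly one point. -/
def IsTangent (L E : Set (EuclideanSpace ℝ (Fin 2))) : Prop := ∃ p, L ∩ E = {p}

local notation "ℝ²" => EuclideanSpace ℝ (Fin 2)

def cross (x y : ℝ²) : ℝ := x 0 * y 1 - x 1 * y 0

theorem inner_eq_coord (z w : ℝ²) : ⟪z, w⟫ = z 0 * w 0 + z 1 * w 1 := by
  simp only [PiLp.inner_apply, RCLike.inner_apply, ringHom_apply, Fin.sum_univ_two]; ring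

theorem norm_sq_eq_coord (z : ℝ²) : ‖z‖ ^ 2 = z 0 ^ 2 + z 1 ^ 2 := by
  simp only [EuclideanSpace.real_norm_sq_eq, Fin.sum_univ_two]

theorem dist_sq_eq_coord (X Y : ℝ²) : dist X Y ^ 2 = (X 0 - Y 0) ^ 2 + (X 1 - Y 1) ^ 2 := by
  rw [dist_eq_norm, norm_sq_eq_coord]; rfl

theorem discrim_eq_zero_of_forall_root_eq {K : Type*} [Field K] {α β γ t₀ : K} (hα : α ≠ 0)
    (h₀ : α * (t₀ * t₀) + β * t₀ + γ = 0)
    (huniq : ∀ t, α * (t * t) + β * t + γ = 0 → t = t₀) : discrim α β γ = 0 := by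
  have hroot : α * ((-β / α - t₀) * (-β / α - t₀)) + β * (-β / α - t₀) + γ = 0 := by
    field_simp
    linear_combination α * h₀
  have hvertex : 2 * α * t₀ + β = 0 := by
    have := huniq _ hroot
    field_simp at this
    linear_combination -this
  rw [discrim_eq_sq_of_quadratic_eq_zero h₀, hvertex, zero_pow two_ne_zero]

theorem lineMap_apply_coord (X Y : ℝ²) (t : ℝ) (i : Fin 2) :
    AffineMap.lineMap X Y t i = X i + t * (Y i - X i) := by
  simp only [AffineMap.lineMap_apply, vsub_eq_sub, vadd_eq_add, PiLp.add_apply, PiLp.smul_apply,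
    PiLp.sub_apply, smul_eq_mul]
  ring

theorem lineMap_mem_ellipse_iff {a b : ℝ} (ha : a ≠ 0) (hb : b ≠ 0) (X Y : ℝ²) (t : ℝ) :
    AffineMap.lineMap X Y t ∈ ellipse a b ↔
      (b ^ 2 * (Y 0 - X 0) ^ 2 + a ^ 2 * (Y 1 - X 1) ^ 2) * (t * t)
        + 2 * (b ^ 2 * X 0 * (Y 0 - X 0) + a ^ 2 * X 1 * (Y 1 - X 1)) * t
        + (b ^ 2 * X 0 ^ 2 + a ^ 2 * X 1 ^ 2 - a ^ 2 * b ^ 2) = 0 := by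
  rw [ellipse, Set.mem_ofPred_eq, lineMap_apply_coord, lineMap_apply_coord,
    div_add_div _ _ (by positivity) (by positivity), div_eq_one_iff_eq (by positivity)]
  constructor <;> intro h <;> linear_combination h

theorem IsTangent.sq_cross_eq {a b : ℝ} (ha : a ≠ 0) (hb : b ≠ 0) {X Y : ℝ²}
    (h : IsTangent (lineThrough X Y) (ellipse a b)) :
    a ^ 2 * (Y 1 - X 1) ^ 2 + b ^ 2 * (Y 0 - X 0) ^ 2 = cross X Y ^ 2 := by
  rcases eq_or_ne X Y with rfl | hXY
  · rw [cross]; ring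
  obtain ⟨P, hP⟩ := h
  have hPmem : P ∈ lineThrough X Y ∩ ellipse a b := hP ▸ rfl
  obtain ⟨t₀, rfl⟩ := mem_affineSpan_pair_iff_exists_lineMap_eq.mp hPmem.1
  have hα : b ^ 2 * (Y 0 - X 0) ^ 2 + a ^ 2 * (Y 1 - X 1) ^ 2 ≠ 0 := by
    contrapose! hXY
    obtain ⟨h0, h1⟩ := (add_eq_zero_iff_of_nonneg (by positivity) (by positivity)).mp hXY
    ext i
    fin_cases i
    · simp only [mul_eq_zero, pow_eq_zero_iff two_ne_zero, hb, sub_eq_zero, false_or] at h0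
      exact h0.symm
    · simp only [mul_eq_zero, pow_eq_zero_iff two_ne_zero, ha, sub_eq_zero, false_or] at h1
      exact h1.symm
  have hdisc := discrim_eq_zero_of_forall_root_eq hα
    ((lineMap_mem_ellipse_iff ha hb X Y t₀).1 hPmem.2) fun t ht ↦ by
      have hmem : AffineMap.lineMap X Y t ∈ lineThrough X Y ∩ ellipse a b :=
        ⟨AffineMap.lineMap_mem_affineSpan_pair t X Y, (lineMap_mem_ellipse_iff ha hb X Y t).2 ht⟩
      rw [hP] at hmem
      exact AffineMap.lineMap_injective ℝ hXY hmem
  rw [discrim] at hdisc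
  have : 4 * a ^ 2 * b ^ 2 *
      (a ^ 2 * (Y 1 - X 1) ^ 2 + b ^ 2 * (Y 0 - X 0) ^ 2 - cross X Y ^ 2) = 0 := by
    rw [cross]; linear_combination hdisc
  have h4 : 4 * a ^ 2 * b ^ 2 ≠ 0 := by positivity
  linear_combination (mul_eq_zero.mp this).resolve_left h4

theorem pt_apply_zero (x y : ℝ) : pt x y 0 = x := rfl

theorem pt_apply_one (x y : ℝ) : pt x y 1 = y := rfl

theorem circle_eq_of_dist_eq {a b k : ℝ} (hb : b ≠ 0)
    (hk : b ^ 2 * k ^ 2 = (a ^ 2 - b ^ 2) * (4 * a ^ 2 - b ^ 2)) {X : ℝ²}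
    (h : dist X (pt 0 (-k)) = 2 * a ^ 2 / b) :
    X 0 ^ 2 + X 1 ^ 2 + 2 * k * X 1 - 5 * a ^ 2 + b ^ 2 = 0 := by
  have hsq := congrArg (· ^ 2) h
  simp only [dist_sq_eq_coord, pt_apply_zero, pt_apply_one, div_pow] at hsq
  field_simp at hsq
  have : b ^ 2 * (X 0 ^ 2 + X 1 ^ 2 + 2 * k * X 1 - 5 * a ^ 2 + b ^ 2) = 0 := by
    linear_combination hsq - hk
  exact (mul_eq_zero.mp this).resolve_left (by positivity)

theorem cross_mul_brocard_poly_eq_zero {a b k x₁ y₁ x₂ y₂ x₃ y₃ : ℝ}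
    (hk : b ^ 2 * k ^ 2 = (a ^ 2 - b ^ 2) * (4 * a ^ 2 - b ^ 2))
    (h₁ : x₁ ^ 2 + y₁ ^ 2 + 2 * k * y₁ - 5 * a ^ 2 + b ^ 2 = 0)
    (h₂ : x₂ ^ 2 + y₂ ^ 2 + 2 * k * y₂ - 5 * a ^ 2 + b ^ 2 = 0)
    (h₃ : x₃ ^ 2 + y₃ ^ 2 + 2 * k * y₃ - 5 * a ^ 2 + b ^ 2 = 0)
    (h₁₂ : a ^ 2 * (y₂ - y₁) ^ 2 + b ^ 2 * (x₂ - x₁) ^ 2 = (x₁ * y₂ - y₁ * x₂) ^ 2)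
    (h₂₃ : a ^ 2 * (y₃ - y₂) ^ 2 + b ^ 2 * (x₃ - x₂) ^ 2 = (x₂ * y₃ - y₂ * x₃) ^ 2)
    (h₃₁ : a ^ 2 * (y₁ - y₃) ^ 2 + b ^ 2 * (x₁ - x₃) ^ 2 = (x₃ * y₁ - y₃ * x₁) ^ 2) :
    ((x₂ - x₁) * (y₃ - y₁) - (y₂ - y₁) * (x₃ - x₁)) *
      (b ^ 2 * ((x₁ - x₂) ^ 2 + (y₁ - y₂) ^ 2 + ((x₂ - x₃) ^ 2 + (y₂ - y₃) ^ 2)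
          + ((x₃ - x₁) ^ 2 + (y₃ - y₁) ^ 2)) ^ 2
        - 4 * (4 * a ^ 2 - b ^ 2) * ((x₂ - x₁) * (y₃ - y₁) - (y₂ - y₁) * (x₃ - x₁)) ^ 2) = 0 := by
  -- The relation fails for degenerate triangles (`(x₁, y₁) = (x₂, y₂)` makes `h₁₂` trivial),
  -- hence the factor.
  linear_combination
    (16 * y₂ ^ 2 * x₃ * y₃ ^ 3 + 16 * y₂ ^ 4 * x₃ * y₃ - 16 * x₂ * y₂ * y₃ ^ 4
      - 16 * x₂ * y₂ ^ 3 * y₃ ^ 2 + 16 * y₁ ^ 2 * y₂ ^ 2 * x₃ * y₃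
      - 16 * y₁ ^ 2 * x₂ * y₂ * y₃ ^ 2 + 16 * k * y₂ * x₃ * y₃ ^ 3
      + 16 * k * y₂ ^ 2 * x₃ * y₃ ^ 2 + 32 * k * y₂ ^ 3 * x₃ * y₃ - 32 * k * x₂ * y₂ * y₃ ^ 3
      - 16 * k * x₂ * y₂ ^ 2 * y₃ ^ 2 - 16 * k * x₂ * y₂ ^ 3 * y₃
      + 32 * k * y₁ ^ 2 * y₂ * x₃ * y₃ - 32 * k * y₁ ^ 2 * x₂ * y₂ * y₃
      - 16 * k * x₁ * y₁ * y₂ * y₃ ^ 2 + 16 * k * x₁ * y₁ * y₂ ^ 2 * y₃ + 8 * b ^ 2 * x₃ * y₃ ^ 3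
      + 8 * b ^ 2 * x₃ ^ 3 * y₃ - 20 * b ^ 2 * y₂ * x₃ * y₃ ^ 2 - 20 * b ^ 2 * y₂ * x₃ ^ 3
      + 16 * b ^ 2 * y₂ ^ 2 * x₃ * y₃ - 28 * b ^ 2 * y₂ ^ 3 * x₃ + 28 * b ^ 2 * x₂ * y₃ ^ 3
      + 12 * b ^ 2 * x₂ * x₃ ^ 2 * y₃ - 16 * b ^ 2 * x₂ * y₂ * y₃ ^ 2
      + 20 * b ^ 2 * x₂ * y₂ ^ 2 * y₃ - 8 * b ^ 2 * x₂ * y₂ ^ 3 - 12 * b ^ 2 * x₂ ^ 2 * y₂ * x₃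
      + 20 * b ^ 2 * x₂ ^ 3 * y₃ - 8 * b ^ 2 * x₂ ^ 3 * y₂ + 12 * b ^ 2 * y₁ * x₃ * y₃ ^ 2
      + 12 * b ^ 2 * y₁ * x₃ ^ 3 + 8 * b ^ 2 * y₁ * y₂ * x₃ * y₃ - 8 * b ^ 2 * y₁ * y₂ ^ 2 * x₃
      + 8 * b ^ 2 * y₁ * x₂ * y₃ ^ 2 - 8 * b ^ 2 * y₁ * x₂ * y₂ * y₃
      - 12 * b ^ 2 * y₁ * x₂ * y₂ ^ 2 - 12 * b ^ 2 * y₁ * x₂ ^ 3 + 8 * b ^ 2 * y₁ ^ 2 * x₃ * y₃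
      - 12 * b ^ 2 * y₁ ^ 2 * y₂ * x₃ + 12 * b ^ 2 * y₁ ^ 2 * x₂ * y₃
      - 8 * b ^ 2 * y₁ ^ 2 * x₂ * y₂ + 4 * b ^ 2 * y₁ ^ 3 * x₃ - 4 * b ^ 2 * y₁ ^ 3 * x₂
      - 8 * b ^ 2 * x₁ * y₂ * y₃ ^ 2 + 8 * b ^ 2 * x₁ * y₂ ^ 2 * y₃
      - 8 * b ^ 2 * x₁ * x₂ * x₃ * y₃ + 8 * b ^ 2 * x₁ * x₂ * y₂ * x₃
      - 4 * b ^ 2 * x₁ * y₁ ^ 2 * y₃ + 4 * b ^ 2 * x₁ * y₁ ^ 2 * y₂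
      + 8 * b ^ 2 * x₁ ^ 2 * x₃ * y₃ - 12 * b ^ 2 * x₁ ^ 2 * y₂ * x₃
      + 12 * b ^ 2 * x₁ ^ 2 * x₂ * y₃ - 8 * b ^ 2 * x₁ ^ 2 * x₂ * y₂
      + 4 * b ^ 2 * x₁ ^ 2 * y₁ * x₃ - 4 * b ^ 2 * x₁ ^ 2 * y₁ * x₂ - 4 * b ^ 2 * x₁ ^ 3 * y₃
      + 4 * b ^ 2 * x₁ ^ 3 * y₂ - 48 * b ^ 2 * k * y₂ * x₃ * y₃ - 48 * b ^ 2 * k * y₂ ^ 2 * x₃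
      + 48 * b ^ 2 * k * x₂ * y₃ ^ 2 + 48 * b ^ 2 * k * x₂ * y₂ * y₃
      + 16 * b ^ 2 * k * y₁ * x₃ * y₃ - 32 * b ^ 2 * k * y₁ * y₂ * x₃
      + 32 * b ^ 2 * k * y₁ * x₂ * y₃ - 16 * b ^ 2 * k * y₁ * x₂ * y₂
      - 8 * b ^ 2 * k * y₁ ^ 2 * x₃ + 8 * b ^ 2 * k * y₁ ^ 2 * x₂ + 8 * b ^ 2 * k * x₁ * y₃ ^ 2
      - 8 * b ^ 2 * k * x₁ * y₂ ^ 2 + 8 * b ^ 2 * k * x₁ * y₁ * y₃ - 8 * b ^ 2 * k * x₁ * y₁ * y₂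
      - 8 * b ^ 4 * x₃ * y₃ - 36 * b ^ 4 * y₂ * x₃ + 36 * b ^ 4 * x₂ * y₃ + 8 * b ^ 4 * x₂ * y₂
      - 16 * b ^ 4 * y₁ * x₃ + 16 * b ^ 4 * y₁ * x₂ + 20 * b ^ 4 * x₁ * y₃ - 20 * b ^ 4 * x₁ * y₂
      - 32 * a ^ 2 * x₃ * y₃ ^ 3 - 16 * a ^ 2 * y₂ * x₃ * y₃ ^ 2 - 96 * a ^ 2 * y₂ ^ 2 * x₃ * y₃
      + 96 * a ^ 2 * x₂ * y₂ * y₃ ^ 2 + 16 * a ^ 2 * x₂ * y₂ ^ 2 * y₃ + 32 * a ^ 2 * x₂ * y₂ ^ 3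
      - 32 * a ^ 2 * y₁ * y₂ * x₃ * y₃ + 32 * a ^ 2 * y₁ * x₂ * y₂ * y₃
      - 64 * a ^ 2 * y₁ ^ 2 * x₃ * y₃ + 64 * a ^ 2 * y₁ ^ 2 * x₂ * y₂
      + 16 * a ^ 2 * x₁ * y₂ * y₃ ^ 2 - 16 * a ^ 2 * x₁ * y₂ ^ 2 * y₃
      + 32 * a ^ 2 * x₁ * y₁ * y₃ ^ 2 - 32 * a ^ 2 * x₁ * y₁ * y₂ ^ 2
      + 40 * a ^ 2 * b ^ 2 * x₃ * y₃ + 180 * a ^ 2 * b ^ 2 * y₂ * x₃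
      - 180 * a ^ 2 * b ^ 2 * x₂ * y₃ - 40 * a ^ 2 * b ^ 2 * x₂ * y₂
      + 80 * a ^ 2 * b ^ 2 * y₁ * x₃ - 80 * a ^ 2 * b ^ 2 * y₁ * x₂
      - 100 * a ^ 2 * b ^ 2 * x₁ * y₃ + 100 * a ^ 2 * b ^ 2 * x₁ * y₂) * h₁ +
    (-16 * y₁ ^ 2 * x₃ * y₃ ^ 3 - 16 * y₁ ^ 2 * y₂ ^ 2 * x₃ * y₃ - 16 * y₁ ^ 4 * x₃ * y₃
      + 16 * x₁ * y₁ * y₃ ^ 4 + 16 * x₁ * y₁ * y₂ ^ 2 * y₃ ^ 2 + 16 * x₁ * y₁ ^ 3 * y₃ ^ 2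
      - 16 * k * y₁ * x₃ * y₃ ^ 3 - 32 * k * y₁ * y₂ ^ 2 * x₃ * y₃
      + 16 * k * y₁ * x₂ * y₂ * y₃ ^ 2 - 16 * k * y₁ ^ 2 * x₃ * y₃ ^ 2
      - 16 * k * y₁ ^ 2 * x₂ * y₂ * y₃ - 32 * k * y₁ ^ 3 * x₃ * y₃ + 32 * k * x₁ * y₁ * y₃ ^ 3
      + 32 * k * x₁ * y₁ * y₂ ^ 2 * y₃ + 16 * k * x₁ * y₁ ^ 2 * y₃ ^ 2
      + 16 * k * x₁ * y₁ ^ 3 * y₃ - 8 * b ^ 2 * x₃ * y₃ ^ 3 - 8 * b ^ 2 * x₃ ^ 3 * y₃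
      - 12 * b ^ 2 * y₂ * x₃ * y₃ ^ 2 - 12 * b ^ 2 * y₂ * x₃ ^ 3 - 8 * b ^ 2 * y₂ ^ 2 * x₃ * y₃
      - 4 * b ^ 2 * y₂ ^ 3 * x₃ + 4 * b ^ 2 * x₂ * y₂ ^ 2 * y₃ - 8 * b ^ 2 * x₂ ^ 2 * x₃ * y₃
      - 4 * b ^ 2 * x₂ ^ 2 * y₂ * x₃ + 4 * b ^ 2 * x₂ ^ 3 * y₃ + 20 * b ^ 2 * y₁ * x₃ * y₃ ^ 2
      + 20 * b ^ 2 * y₁ * x₃ ^ 3 - 8 * b ^ 2 * y₁ * y₂ * x₃ * y₃ + 12 * b ^ 2 * y₁ * y₂ ^ 2 * x₃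
      + 8 * b ^ 2 * y₁ * x₂ * y₃ ^ 2 - 4 * b ^ 2 * y₁ * x₂ * y₂ ^ 2
      + 12 * b ^ 2 * y₁ * x₂ ^ 2 * x₃ - 4 * b ^ 2 * y₁ * x₂ ^ 3 - 16 * b ^ 2 * y₁ ^ 2 * x₃ * y₃
      + 8 * b ^ 2 * y₁ ^ 2 * y₂ * x₃ - 8 * b ^ 2 * y₁ ^ 2 * x₂ * y₃ + 28 * b ^ 2 * y₁ ^ 3 * x₃
      - 28 * b ^ 2 * x₁ * y₃ ^ 3 - 12 * b ^ 2 * x₁ * x₃ ^ 2 * y₃ - 8 * b ^ 2 * x₁ * y₂ * y₃ ^ 2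
      - 12 * b ^ 2 * x₁ * y₂ ^ 2 * y₃ + 4 * b ^ 2 * x₁ * y₂ ^ 3 + 8 * b ^ 2 * x₁ * x₂ * x₃ * y₃
      - 12 * b ^ 2 * x₁ * x₂ ^ 2 * y₃ + 4 * b ^ 2 * x₁ * x₂ ^ 2 * y₂
      + 16 * b ^ 2 * x₁ * y₁ * y₃ ^ 2 + 8 * b ^ 2 * x₁ * y₁ * y₂ * y₃
      + 8 * b ^ 2 * x₁ * y₁ * y₂ ^ 2 - 8 * b ^ 2 * x₁ * y₁ * x₂ * x₃
      + 8 * b ^ 2 * x₁ * y₁ * x₂ ^ 2 - 20 * b ^ 2 * x₁ * y₁ ^ 2 * y₃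
      + 12 * b ^ 2 * x₁ * y₁ ^ 2 * y₂ + 8 * b ^ 2 * x₁ * y₁ ^ 3 + 12 * b ^ 2 * x₁ ^ 2 * y₁ * x₃
      - 20 * b ^ 2 * x₁ ^ 3 * y₃ + 12 * b ^ 2 * x₁ ^ 3 * y₂ + 8 * b ^ 2 * x₁ ^ 3 * y₁
      - 16 * b ^ 2 * k * y₂ * x₃ * y₃ + 8 * b ^ 2 * k * y₂ ^ 2 * x₃ - 8 * b ^ 2 * k * x₂ * y₃ ^ 2
      - 8 * b ^ 2 * k * x₂ * y₂ * y₃ + 48 * b ^ 2 * k * y₁ * x₃ * y₃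
      + 32 * b ^ 2 * k * y₁ * y₂ * x₃ + 8 * b ^ 2 * k * y₁ * x₂ * y₂
      + 48 * b ^ 2 * k * y₁ ^ 2 * x₃ + 8 * b ^ 2 * k * y₁ ^ 2 * x₂ - 48 * b ^ 2 * k * x₁ * y₃ ^ 2
      - 32 * b ^ 2 * k * x₁ * y₂ * y₃ - 8 * b ^ 2 * k * x₁ * y₂ ^ 2
      - 48 * b ^ 2 * k * x₁ * y₁ * y₃ + 16 * b ^ 2 * k * x₁ * y₁ * y₂ + 8 * b ^ 4 * x₃ * y₃
      + 16 * b ^ 4 * y₂ * x₃ - 20 * b ^ 4 * x₂ * y₃ + 36 * b ^ 4 * y₁ * x₃ + 20 * b ^ 4 * y₁ * x₂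
      - 36 * b ^ 4 * x₁ * y₃ - 16 * b ^ 4 * x₁ * y₂ - 8 * b ^ 4 * x₁ * y₁
      + 32 * a ^ 2 * x₃ * y₃ ^ 3 + 64 * a ^ 2 * y₂ ^ 2 * x₃ * y₃ - 32 * a ^ 2 * x₂ * y₂ * y₃ ^ 2
      + 16 * a ^ 2 * y₁ * x₃ * y₃ ^ 2 + 32 * a ^ 2 * y₁ * y₂ * x₃ * y₃
      - 16 * a ^ 2 * y₁ * x₂ * y₃ ^ 2 + 96 * a ^ 2 * y₁ ^ 2 * x₃ * y₃
      + 16 * a ^ 2 * y₁ ^ 2 * x₂ * y₃ + 32 * a ^ 2 * y₁ ^ 2 * x₂ * y₂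
      - 96 * a ^ 2 * x₁ * y₁ * y₃ ^ 2 - 32 * a ^ 2 * x₁ * y₁ * y₂ * y₃
      - 64 * a ^ 2 * x₁ * y₁ * y₂ ^ 2 - 16 * a ^ 2 * x₁ * y₁ ^ 2 * y₃ - 32 * a ^ 2 * x₁ * y₁ ^ 3
      - 40 * a ^ 2 * b ^ 2 * x₃ * y₃ - 80 * a ^ 2 * b ^ 2 * y₂ * x₃
      + 100 * a ^ 2 * b ^ 2 * x₂ * y₃ - 180 * a ^ 2 * b ^ 2 * y₁ * x₃
      - 100 * a ^ 2 * b ^ 2 * y₁ * x₂ + 180 * a ^ 2 * b ^ 2 * x₁ * y₃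
      + 80 * a ^ 2 * b ^ 2 * x₁ * y₂ + 40 * a ^ 2 * b ^ 2 * x₁ * y₁) * h₂ +
    (16 * y₁ ^ 2 * x₂ * y₂ * y₃ ^ 2 + 16 * y₁ ^ 2 * x₂ * y₂ ^ 3 + 16 * y₁ ^ 4 * x₂ * y₂
      - 16 * x₁ * y₁ * y₂ ^ 2 * y₃ ^ 2 - 16 * x₁ * y₁ * y₂ ^ 4 - 16 * x₁ * y₁ ^ 3 * y₂ ^ 2
      - 16 * k * y₁ * y₂ ^ 2 * x₃ * y₃ + 32 * k * y₁ * x₂ * y₂ * y₃ ^ 2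
      + 16 * k * y₁ * x₂ * y₂ ^ 3 + 16 * k * y₁ ^ 2 * y₂ * x₃ * y₃
      + 16 * k * y₁ ^ 2 * x₂ * y₂ ^ 2 + 32 * k * y₁ ^ 3 * x₂ * y₂
      - 32 * k * x₁ * y₁ * y₂ * y₃ ^ 2 - 32 * k * x₁ * y₁ * y₂ ^ 3
      - 16 * k * x₁ * y₁ ^ 2 * y₂ ^ 2 - 16 * k * x₁ * y₁ ^ 3 * y₂ - 4 * b ^ 2 * y₂ * x₃ * y₃ ^ 2
      - 4 * b ^ 2 * y₂ * x₃ ^ 3 + 4 * b ^ 2 * x₂ * y₃ ^ 3 + 4 * b ^ 2 * x₂ * x₃ ^ 2 * y₃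
      + 8 * b ^ 2 * x₂ * y₂ * y₃ ^ 2 + 8 * b ^ 2 * x₂ * y₂ * x₃ ^ 2
      + 12 * b ^ 2 * x₂ * y₂ ^ 2 * y₃ + 8 * b ^ 2 * x₂ * y₂ ^ 3 + 12 * b ^ 2 * x₂ ^ 3 * y₃
      + 8 * b ^ 2 * x₂ ^ 3 * y₂ + 4 * b ^ 2 * y₁ * x₃ * y₃ ^ 2 + 4 * b ^ 2 * y₁ * x₃ ^ 3
      - 8 * b ^ 2 * y₁ * y₂ ^ 2 * x₃ - 12 * b ^ 2 * y₁ * x₂ * y₃ ^ 2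
      - 12 * b ^ 2 * y₁ * x₂ * x₃ ^ 2 + 8 * b ^ 2 * y₁ * x₂ * y₂ * y₃
      - 20 * b ^ 2 * y₁ * x₂ * y₂ ^ 2 - 20 * b ^ 2 * y₁ * x₂ ^ 3 + 8 * b ^ 2 * y₁ ^ 2 * y₂ * x₃
      - 8 * b ^ 2 * y₁ ^ 2 * x₂ * y₃ + 16 * b ^ 2 * y₁ ^ 2 * x₂ * y₂ - 28 * b ^ 2 * y₁ ^ 3 * x₂
      - 4 * b ^ 2 * x₁ * y₃ ^ 3 - 4 * b ^ 2 * x₁ * x₃ ^ 2 * y₃ + 12 * b ^ 2 * x₁ * y₂ * y₃ ^ 2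
      + 12 * b ^ 2 * x₁ * y₂ * x₃ ^ 2 + 8 * b ^ 2 * x₁ * y₂ ^ 2 * y₃ + 28 * b ^ 2 * x₁ * y₂ ^ 3
      - 8 * b ^ 2 * x₁ * x₂ * y₂ * x₃ + 12 * b ^ 2 * x₁ * x₂ ^ 2 * y₂
      - 8 * b ^ 2 * x₁ * y₁ * y₃ ^ 2 - 8 * b ^ 2 * x₁ * y₁ * x₃ ^ 2
      - 8 * b ^ 2 * x₁ * y₁ * y₂ * y₃ - 16 * b ^ 2 * x₁ * y₁ * y₂ ^ 2
      + 8 * b ^ 2 * x₁ * y₁ * x₂ * x₃ - 12 * b ^ 2 * x₁ * y₁ ^ 2 * y₃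
      + 20 * b ^ 2 * x₁ * y₁ ^ 2 * y₂ - 8 * b ^ 2 * x₁ * y₁ ^ 3 - 12 * b ^ 2 * x₁ ^ 2 * y₁ * x₂
      - 12 * b ^ 2 * x₁ ^ 3 * y₃ + 20 * b ^ 2 * x₁ ^ 3 * y₂ - 8 * b ^ 2 * x₁ ^ 3 * y₁
      + 8 * b ^ 2 * k * y₂ * x₃ * y₃ + 8 * b ^ 2 * k * y₂ ^ 2 * x₃ - 8 * b ^ 2 * k * x₂ * y₃ ^ 2
      + 16 * b ^ 2 * k * x₂ * y₂ * y₃ - 8 * b ^ 2 * k * y₁ * x₃ * y₃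
      - 32 * b ^ 2 * k * y₁ * x₂ * y₃ - 48 * b ^ 2 * k * y₁ * x₂ * y₂
      - 8 * b ^ 2 * k * y₁ ^ 2 * x₃ - 48 * b ^ 2 * k * y₁ ^ 2 * x₂ + 8 * b ^ 2 * k * x₁ * y₃ ^ 2
      + 32 * b ^ 2 * k * x₁ * y₂ * y₃ + 48 * b ^ 2 * k * x₁ * y₂ ^ 2
      - 16 * b ^ 2 * k * x₁ * y₁ * y₃ + 48 * b ^ 2 * k * x₁ * y₁ * y₂ + 20 * b ^ 4 * y₂ * x₃
      - 16 * b ^ 4 * x₂ * y₃ - 8 * b ^ 4 * x₂ * y₂ - 20 * b ^ 4 * y₁ * x₃ - 36 * b ^ 4 * y₁ * x₂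
      + 16 * b ^ 4 * x₁ * y₃ + 36 * b ^ 4 * x₁ * y₂ + 8 * b ^ 4 * x₁ * y₁
      + 32 * a ^ 2 * y₂ ^ 2 * x₃ * y₃ - 64 * a ^ 2 * x₂ * y₂ * y₃ ^ 2 - 32 * a ^ 2 * x₂ * y₂ ^ 3
      + 16 * a ^ 2 * y₁ * y₂ ^ 2 * x₃ - 32 * a ^ 2 * y₁ * x₂ * y₂ * y₃
      - 16 * a ^ 2 * y₁ * x₂ * y₂ ^ 2 - 32 * a ^ 2 * y₁ ^ 2 * x₃ * y₃
      - 16 * a ^ 2 * y₁ ^ 2 * y₂ * x₃ - 96 * a ^ 2 * y₁ ^ 2 * x₂ * y₂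
      + 64 * a ^ 2 * x₁ * y₁ * y₃ ^ 2 + 32 * a ^ 2 * x₁ * y₁ * y₂ * y₃
      + 96 * a ^ 2 * x₁ * y₁ * y₂ ^ 2 + 16 * a ^ 2 * x₁ * y₁ ^ 2 * y₂ + 32 * a ^ 2 * x₁ * y₁ ^ 3
      - 100 * a ^ 2 * b ^ 2 * y₂ * x₃ + 80 * a ^ 2 * b ^ 2 * x₂ * y₃
      + 40 * a ^ 2 * b ^ 2 * x₂ * y₂ + 100 * a ^ 2 * b ^ 2 * y₁ * x₃
      + 180 * a ^ 2 * b ^ 2 * y₁ * x₂ - 80 * a ^ 2 * b ^ 2 * x₁ * y₃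
      - 180 * a ^ 2 * b ^ 2 * x₁ * y₂ - 40 * a ^ 2 * b ^ 2 * x₁ * y₁) * h₃ +
    (16 * y₂ ^ 2 * x₃ * y₃ - 16 * x₂ * y₂ * y₃ ^ 2 - 16 * y₁ ^ 2 * x₃ * y₃
      + 16 * x₁ * y₁ * y₃ ^ 2 + 32 * k * y₂ * x₃ * y₃ - 16 * k * x₂ * y₃ ^ 2
      - 16 * k * x₂ * y₂ * y₃ - 32 * k * y₁ * x₃ * y₃ + 16 * k * x₁ * y₃ ^ 2
      + 16 * k * x₁ * y₁ * y₃ - 16 * b ^ 2 * x₂ * y₃ + 16 * b ^ 2 * x₁ * y₃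
      - 48 * a ^ 2 * y₂ * x₃ + 64 * a ^ 2 * x₂ * y₃ + 32 * a ^ 2 * x₂ * y₂ + 48 * a ^ 2 * y₁ * x₃
      - 16 * a ^ 2 * y₁ * x₂ - 64 * a ^ 2 * x₁ * y₃ + 16 * a ^ 2 * x₁ * y₂
      - 32 * a ^ 2 * x₁ * y₁) * h₁₂ +
    (-16 * y₁ ^ 2 * x₃ * y₃ + 16 * y₁ ^ 2 * x₂ * y₂ + 16 * x₁ * y₁ * y₃ ^ 2
      - 16 * x₁ * y₁ * y₂ ^ 2 - 16 * k * y₁ * x₃ * y₃ + 16 * k * y₁ * x₂ * y₂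
      - 16 * k * y₁ ^ 2 * x₃ + 16 * k * y₁ ^ 2 * x₂ + 32 * k * x₁ * y₁ * y₃
      - 32 * k * x₁ * y₁ * y₂ - 16 * b ^ 2 * y₁ * x₃ + 16 * b ^ 2 * y₁ * x₂
      + 32 * a ^ 2 * x₃ * y₃ - 16 * a ^ 2 * y₂ * x₃ + 16 * a ^ 2 * x₂ * y₃ - 32 * a ^ 2 * x₂ * y₂
      + 64 * a ^ 2 * y₁ * x₃ - 64 * a ^ 2 * y₁ * x₂ - 48 * a ^ 2 * x₁ * y₃
      + 48 * a ^ 2 * x₁ * y₂) * h₂₃ +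
    (16 * y₂ ^ 2 * x₃ * y₃ - 16 * x₂ * y₂ * y₃ ^ 2 + 16 * y₁ ^ 2 * x₂ * y₂
      - 16 * x₁ * y₁ * y₂ ^ 2 + 16 * k * y₂ * x₃ * y₃ + 16 * k * y₂ ^ 2 * x₃
      - 32 * k * x₂ * y₂ * y₃ + 32 * k * y₁ * x₂ * y₂ - 16 * k * x₁ * y₂ ^ 2
      - 16 * k * x₁ * y₁ * y₂ + 16 * b ^ 2 * y₂ * x₃ - 16 * b ^ 2 * x₁ * y₂
      - 32 * a ^ 2 * x₃ * y₃ - 64 * a ^ 2 * y₂ * x₃ + 48 * a ^ 2 * x₂ * y₃ + 16 * a ^ 2 * y₁ * x₃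
      - 48 * a ^ 2 * y₁ * x₂ - 16 * a ^ 2 * x₁ * y₃ + 64 * a ^ 2 * x₁ * y₂
      + 32 * a ^ 2 * x₁ * y₁) * h₃₁ +
    (-16 * y₂ * x₃ * y₃ ^ 2 + 16 * y₂ ^ 2 * x₃ * y₃ - 16 * y₂ ^ 3 * x₃ + 16 * x₂ * y₃ ^ 3
      - 16 * x₂ * y₂ * y₃ ^ 2 + 16 * x₂ * y₂ ^ 2 * y₃ + 16 * y₁ * x₃ * y₃ ^ 2
      + 32 * y₁ * y₂ ^ 2 * x₃ - 32 * y₁ * x₂ * y₃ ^ 2 - 16 * y₁ * x₂ * y₂ ^ 2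
      - 16 * y₁ ^ 2 * x₃ * y₃ - 32 * y₁ ^ 2 * y₂ * x₃ + 32 * y₁ ^ 2 * x₂ * y₃
      + 16 * y₁ ^ 2 * x₂ * y₂ + 16 * y₁ ^ 3 * x₃ - 16 * y₁ ^ 3 * x₂ - 16 * x₁ * y₃ ^ 3
      + 32 * x₁ * y₂ * y₃ ^ 2 - 32 * x₁ * y₂ ^ 2 * y₃ + 16 * x₁ * y₂ ^ 3 + 16 * x₁ * y₁ * y₃ ^ 2
      - 16 * x₁ * y₁ * y₂ ^ 2 - 16 * x₁ * y₁ ^ 2 * y₃ + 16 * x₁ * y₁ ^ 2 * y₂) * hk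

theorem cross_mul_brocard_eq_zero {a b k : ℝ} (ha : a ≠ 0) (hb : b ≠ 0)
    (hk : b ^ 2 * k ^ 2 = (a ^ 2 - b ^ 2) * (4 * a ^ 2 - b ^ 2)) {A B C : ℝ²}
    (hA : dist A (pt 0 (-k)) = 2 * a ^ 2 / b) (hB : dist B (pt 0 (-k)) = 2 * a ^ 2 / b)
    (hC : dist C (pt 0 (-k)) = 2 * a ^ 2 / b)
    (tAB : IsTangent (lineThrough A B) (ellipse a b))
    (tBC : IsTangent (lineThrough B C) (ellipse a b))
    (tCA : IsTangent (lineThrough C A) (ellipse a b)) :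
    cross (B - A) (C - A) *
      (b ^ 2 * (dist A B ^ 2 + dist B C ^ 2 + dist C A ^ 2) ^ 2
        - 4 * (4 * a ^ 2 - b ^ 2) * cross (B - A) (C - A) ^ 2) = 0 := by
  have h := cross_mul_brocard_poly_eq_zero hk (circle_eq_of_dist_eq hb hk hA)
    (circle_eq_of_dist_eq hb hk hB) (circle_eq_of_dist_eq hb hk hC) (tAB.sq_cross_eq ha hb)
    (tBC.sq_cross_eq ha hb) (tCA.sq_cross_eq ha hb)
  simpa only [cross, dist_sq_eq_coord, PiLp.sub_apply] using h

theorem cross_mul_cross (z w u v : ℝ²) :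
    cross z w * cross u v = ⟪z, u⟫ * ⟪w, v⟫ - ⟪z, v⟫ * ⟪w, u⟫ := by
  simp only [cross, inner_eq_coord]; ring

theorem cross_sq_add_inner_sq (u v : ℝ²) : cross u v ^ 2 + ⟪u, v⟫ ^ 2 = ‖u‖ ^ 2 * ‖v‖ ^ 2 := by
  simp only [cross, inner_eq_coord, norm_sq_eq_coord]; ring

section Orthonormal

variable {u v : ℝ²} (hu : ‖u‖ = 1) (hv : ‖v‖ = 1) (huv : ⟪u, v⟫ = 0)
include hu hv huv

theorem cross_sq_eq_one_of_orthonormal : cross u v ^ 2 = 1 := by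
  simpa [hu, hv, huv] using cross_sq_add_inner_sq u v

theorem norm_sq_eq_inner_sq_add_inner_sq (z : ℝ²) : ‖z‖ ^ 2 = ⟪z, u⟫ ^ 2 + ⟪z, v⟫ ^ 2 := by
  have hlag := cross_sq_add_inner_sq z u
  have hbc := cross_mul_cross z u u v
  rw [real_inner_self_eq_norm_sq, hu, huv] at hbc
  rw [hu] at hlag
  linear_combination -hlag + (cross z u * cross u v - ⟪z, v⟫) * hbc
    - cross z u ^ 2 * cross_sq_eq_one_of_orthonormal hu hv huv

end Orthonormal

theorem sum_sq_of_unit_vectors_sum_zero {x₁ y₁ x₂ y₂ x₃ y₃ : ℝ} (h₁ : x₁ ^ 2 + y₁ ^ 2 = 1)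
    (h₂ : x₂ ^ 2 + y₂ ^ 2 = 1) (h₃ : x₃ ^ 2 + y₃ ^ 2 = 1)
    (hx : x₁ + x₂ + x₃ = 0) (hy : y₁ + y₂ + y₃ = 0) :
    x₁ ^ 2 + x₂ ^ 2 + x₃ ^ 2 = 3 / 2 ∧ y₁ ^ 2 + y₂ ^ 2 + y₃ ^ 2 = 3 / 2 ∧
      (x₁ * y₂ - y₁ * x₂) ^ 2 = 3 / 4 := by
  obtain rfl : x₃ = -x₁ - x₂ := by linear_combination hx
  obtain rfl : y₃ = -y₁ - y₂ := by linear_combination hy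
  have hdot : 2 * (x₁ * x₂ + y₁ * y₂) = -1 := by linear_combination h₃ - h₁ - h₂
  -- `z₁² + z₁z₂ + z₂² = z₁z₂ (1 + 2 Re (z₁ z̄₂)) = 0` for the unit complex numbers `zᵢ = xᵢ + i yᵢ`
  have hre : x₁ ^ 2 + x₁ * x₂ + x₂ ^ 2 = y₁ ^ 2 + y₁ * y₂ + y₂ ^ 2 := by
    linear_combination (y₁ ^ 2 - x₁ ^ 2) * h₂ + (y₂ ^ 2 - x₂ ^ 2) * h₁ + (x₁ * x₂ - y₁ * y₂) * hdot
  refine ⟨?_, ?_, ?_⟩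
  · linear_combination h₁ + h₂ + hre + hdot / 2
  · linear_combination h₁ + h₂ - hre + hdot / 2
  · linear_combination (x₂ ^ 2 + y₂ ^ 2) * h₁ + h₂ - (x₁ * x₂ + y₁ * y₂ - 1 / 2) / 2 * hdot

section Steiner

variable {A B C G u v : ℝ²} {p q : ℝ}

theorem inner_sub_centroid_sum (hG : G = (3 : ℝ)⁻¹ • (A + B + C)) (w : ℝ²) :
    ⟪A - G, w⟫ + ⟪B - G, w⟫ + ⟪C - G, w⟫ = 0 := by
  rw [← inner_add_left, ← inner_add_left, hG]
  convert inner_zero_left w using 2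
  module

variable (hu : ‖u‖ = 1) (hv : ‖v‖ = 1) (huv : ⟪u, v⟫ = 0) (hp : p ≠ 0) (hq : q ≠ 0)
  (hG : G = (3 : ℝ)⁻¹ • (A + B + C))
  (hS : ∀ X ∈ ({A, B, C} : Set ℝ²), ⟪X - G, u⟫ ^ 2 / p ^ 2 + ⟪X - G, v⟫ ^ 2 / q ^ 2 = 1)
include hp hq hG hS

theorem sum_inner_sq_of_steiner :
    ⟪A - G, u⟫ ^ 2 + ⟪B - G, u⟫ ^ 2 + ⟪C - G, u⟫ ^ 2 = 3 / 2 * p ^ 2 ∧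
      ⟪A - G, v⟫ ^ 2 + ⟪B - G, v⟫ ^ 2 + ⟪C - G, v⟫ ^ 2 = 3 / 2 * q ^ 2 ∧
      (⟪A - G, u⟫ * ⟪B - G, v⟫ - ⟪A - G, v⟫ * ⟪B - G, u⟫) ^ 2 = 3 / 4 * (p ^ 2 * q ^ 2) := by
  have hunit : ∀ X ∈ ({A, B, C} : Set ℝ²), (⟪X - G, u⟫ / p) ^ 2 + (⟪X - G, v⟫ / q) ^ 2 = 1 :=
    fun X hX ↦ by rw [div_pow, div_pow]; exact hS X hX
  have hsum (w : ℝ²) (r : ℝ) : ⟪A - G, w⟫ / r + ⟪B - G, w⟫ / r + ⟪C - G, w⟫ / r = 0 := by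
    rw [← add_div, ← add_div, inner_sub_centroid_sum hG, zero_div]
  obtain ⟨hx, hy, hxy⟩ := sum_sq_of_unit_vectors_sum_zero (hunit A (by simp)) (hunit B (by simp))
    (hunit C (by simp)) (hsum u p) (hsum v q)
  refine ⟨?_, ?_, ?_⟩
  · field_simp at hx; linear_combination hx / 2
  · field_simp at hy; linear_combination hy / 2
  · field_simp at hxy; linear_combination hxy / 4

include hu hv huv

theorem sum_dist_sq_of_steiner :
    dist A B ^ 2 + dist B C ^ 2 + dist C A ^ 2 = 9 / 2 * (p ^ 2 + q ^ 2) := by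
  have hdist (X Y : ℝ²) :
      dist X Y ^ 2 = (⟪X - G, u⟫ - ⟪Y - G, u⟫) ^ 2 + (⟪X - G, v⟫ - ⟪Y - G, v⟫) ^ 2 := by
    rw [dist_eq_norm, norm_sq_eq_inner_sq_add_inner_sq hu hv huv, ← inner_sub_left,
      ← inner_sub_left, sub_sub_sub_cancel_right]
  obtain ⟨hx, hy, -⟩ := sum_inner_sq_of_steiner hp hq hG hS
  rw [hdist, hdist, hdist]
  linear_combination 3 * hx + 3 * hy
    - (⟪A - G, u⟫ + ⟪B - G, u⟫ + ⟪C - G, u⟫) * inner_sub_centroid_sum hG u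
    - (⟪A - G, v⟫ + ⟪B - G, v⟫ + ⟪C - G, v⟫) * inner_sub_centroid_sum hG v

theorem cross_sq_of_steiner : cross (B - A) (C - A) ^ 2 = 27 / 4 * (p ^ 2 * q ^ 2) := by
  obtain ⟨-, -, hxy⟩ := sum_inner_sq_of_steiner hp hq hG hS
  have hsub (X : ℝ²) (w : ℝ²) : ⟪X - A, w⟫ = ⟪X - G, w⟫ - ⟪A - G, w⟫ := by
    rw [← inner_sub_left, sub_sub_sub_cancel_right]
  have hCu : ⟪C - G, u⟫ = -⟪A - G, u⟫ - ⟪B - G, u⟫ := by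
    linear_combination inner_sub_centroid_sum hG u
  have hCv : ⟪C - G, v⟫ = -⟪A - G, v⟫ - ⟪B - G, v⟫ := by
    linear_combination inner_sub_centroid_sum hG v
  have hframe := cross_mul_cross (B - A) (C - A) u v
  rw [hsub, hsub, hsub, hsub, hCu, hCv] at hframe
  linear_combination -cross (B - A) (C - A) ^ 2 * cross_sq_eq_one_of_orthonormal hu hv huv
    + (cross (B - A) (C - A) * cross u v
        + 3 * (⟪A - G, u⟫ * ⟪B - G, v⟫ - ⟪A - G, v⟫ * ⟪B - G, u⟫)) * hframe
    + 9 * hxy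

end Steiner

theorem sq_div_sq_eq_of_brocard_relation {a b p q : ℝ} (hab : b < a) (hb : 0 < b) (hq : 0 < q)
    (hpq : q ≤ p)
    (h : 3 * b ^ 2 * (p ^ 2 + q ^ 2) ^ 2 = 4 * (4 * a ^ 2 - b ^ 2) * (p ^ 2 * q ^ 2)) :
    p ^ 2 / q ^ 2 =
      (8 * a ^ 2 - 5 * b ^ 2 + 4 * √(4 * a ^ 4 - 5 * a ^ 2 * b ^ 2 + b ^ 4)) / (3 * b ^ 2) := by
  set s := √(4 * a ^ 4 - 5 * a ^ 2 * b ^ 2 + b ^ 4)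
  have hD : 4 * a ^ 4 - 5 * a ^ 2 * b ^ 2 + b ^ 4 = (a ^ 2 - b ^ 2) * (4 * a ^ 2 - b ^ 2) := by ring
  have hab2 : 0 < a ^ 2 - b ^ 2 := by nlinarith
  have hs2 : s ^ 2 = (a ^ 2 - b ^ 2) * (4 * a ^ 2 - b ^ 2) := by
    rw [Real.sq_sqrt (by rw [hD]; nlinarith), hD]
  have hs : 2 * (a ^ 2 - b ^ 2) < s := by
    rw [Real.lt_sqrt (by positivity), hD]
    nlinarith [mul_pos hab2 (by positivity : (0 : ℝ) < 3 * b ^ 2)]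
  have hroots : (3 * b ^ 2 * p ^ 2 - (8 * a ^ 2 - 5 * b ^ 2) * q ^ 2 - 4 * s * q ^ 2) *
      (3 * b ^ 2 * p ^ 2 - (8 * a ^ 2 - 5 * b ^ 2) * q ^ 2 + 4 * s * q ^ 2) = 0 := by
    linear_combination 3 * b ^ 2 * h - 16 * q ^ 4 * hs2
  have hpos : 0 < 3 * b ^ 2 * p ^ 2 - (8 * a ^ 2 - 5 * b ^ 2) * q ^ 2 + 4 * s * q ^ 2 := by
    have : q ^ 2 ≤ p ^ 2 := pow_le_pow_left₀ hq.le hpq 2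
    nlinarith [sq_pos_of_pos hq]
  rw [div_eq_div_iff (by positivity) (by positivity)]
  linear_combination (mul_eq_zero.mp hroots).resolve_right hpos.ne'

theorem brocard_porism_steiner_aspect_ratio_general (a b c δ₁ R : ℝ) (hab : a > b) (hb : 0 < b)
    (hc : c = Real.sqrt (a ^ 2 - b ^ 2)) (hδ : δ₁ = Real.sqrt (4 * a ^ 2 - b ^ 2))
    (hR : R = 2 * a ^ 2 / b)
    (O : EuclideanSpace ℝ (Fin 2)) (hO : O = pt 0 (-(c * δ₁ / b)))
    (A B C : EuclideanSpace ℝ (Fin 2))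
    (hA : dist A O = R) (hB : dist B O = R) (hC : dist C O = R)
    (tAB : IsTangent (lineThrough A B) (ellipse a b))
    (tBC : IsTangent (lineThrough B C) (ellipse a b))
    (tCA : IsTangent (lineThrough C A) (ellipse a b))
    (G : EuclideanSpace ℝ (Fin 2)) (hG : G = (3 : ℝ)⁻¹ • (A + B + C))
    (u v : EuclideanSpace ℝ (Fin 2))
    (hu : ‖u‖ = 1) (hv : ‖v‖ = 1) (huv : ⟪u, v⟫ = 0)
    (p q : ℝ) (hpq : p ≥ q) (hq : 0 < q)
    (hSteiner : ∀ X ∈ ({A, B, C} : Set (EuclideanSpace ℝ (Fin 2))),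
      ⟪X - G, u⟫ ^ 2 / p ^ 2 + ⟪X - G, v⟫ ^ 2 / q ^ 2 = 1) :
    p ^ 2 / q ^ 2 =
      (8 * a ^ 2 - 5 * b ^ 2 +
        4 * Real.sqrt (4 * a ^ 4 - 5 * a ^ 2 * b ^ 2 + b ^ 4)) / (3 * b ^ 2) := by
  subst hO hR
  have hk : b ^ 2 * (c * δ₁ / b) ^ 2 = (a ^ 2 - b ^ 2) * (4 * a ^ 2 - b ^ 2) := by
    rw [div_pow, mul_div_cancel₀ _ (by positivity), mul_pow, hc, hδ,
      Real.sq_sqrt (by nlinarith), Real.sq_sqrt (by nlinarith)]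
  have hp : 0 < p := hq.trans_le hpq
  have hbrocard := cross_mul_brocard_eq_zero (hb.trans hab).ne' hb.ne' hk hA hB hC tAB tBC tCA
  have hdist := sum_dist_sq_of_steiner hu hv huv hp.ne' hq.ne' hG hSteiner
  have hcross := cross_sq_of_steiner hu hv huv hp.ne' hq.ne' hG hSteiner
  have hcross0 : cross (B - A) (C - A) ≠ 0 := by
    intro h0
    rw [h0] at hcross
    nlinarith [mul_pos (pow_pos hp 2) (pow_pos hq 2)]
  have hrel := (mul_eq_zero.mp hbrocard).resolve_left hcross0
  rw [hdist, hcross] at hrel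
  exact sq_div_sq_eq_of_brocard_relation hab hb hq hpq (by linear_combination 4 / 27 * hrel)

/-- Over the Brocard porism, the Steiner circumellipse (the ellipse centered at the
centroid `G` through the three vertices, with semi-axes `p ≥ q` in the orthonormal
directions `u, v`) has invariant squared aspect ratio
`p²/q² = (8a² − 5b² + 4√(4a⁴ − 5a²b² + b⁴))/(3b²)`. -/
theorem brocard_porism_steiner_aspect_ratio (a b c δ₁ R : ℝ) (hab : a > b) (hb : 0 < b)
    (hc : c = Real.sqrt (a ^ 2 - b ^ 2)) (hδ : δ₁ = Real.sqrt (4 * a ^ 2 - b ^ 2))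
    (hR : R = 2 * a ^ 2 / b)
    (O : EuclideanSpace ℝ (Fin 2)) (hO : O = pt 0 (-(c * δ₁ / b)))
    (A B C : EuclideanSpace ℝ (Fin 2))
    (hncol : ¬ Collinear ℝ ({A, B, C} : Set (EuclideanSpace ℝ (Fin 2))))
    (hA : dist A O = R) (hB : dist B O = R) (hC : dist C O = R)
    (tAB : IsTangent (lineThrough A B) (ellipse a b))
    (tBC : IsTangent (lineThrough B C) (ellipse a b))
    (tCA : IsTangent (lineThrough C A) (ellipse a b))
    (G : EuclideanSpace ℝ (Fin 2)) (hG : G = (3 : ℝ)⁻¹ • (A + B + C))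
    (u v : EuclideanSpace ℝ (Fin 2))
    (hu : ‖u‖ = 1) (hv : ‖v‖ = 1) (huv : ⟪u, v⟫ = 0)
    (p q : ℝ) (hpq : p ≥ q) (hq : 0 < q)
    (hSteiner : ∀ X ∈ ({A, B, C} : Set (EuclideanSpace ℝ (Fin 2))),
      ⟪X - G, u⟫ ^ 2 / p ^ 2 + ⟪X - G, v⟫ ^ 2 / q ^ 2 = 1) :
    p ^ 2 / q ^ 2 =
      (8 * a ^ 2 - 5 * b ^ 2 +
        4 * Real.sqrt (4 * a ^ 4 - 5 * a ^ 2 * b ^ 2 + b ^ 4)) / (3 * b ^ 2) :=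
  brocard_porism_steiner_aspect_ratio_general a b c δ₁ R hab hb hc hδ hR O hO A B C hA hB hC tAB tBC
    tCA G hG u v hu hv huv p q hpq hq hSteiner
end

section
/- Let a > b > 0 and t ∈ ℝ, and let A = P₀(t), B = P₁(t), C = P₂(t) be the vertices of the triangle T(t) of the homothetic Poncelet family, with sidelengths α = |B − C|, β = |C − A|, γ = |A − B|. Then the Brocard midpoint X₃₉ = [α²(β² + γ²)·A + β²(γ² + α²)·B + γ²(α² + β²)·C] / [α²(β² + γ²) + β²(γ² + α²) + γ²(α² + β²)] equals ( −a(a² − b²)·cos(3t)/(2(a² + 3b²)), −b(a² − b²)·sin(3t)/(2(3a² + b²)) ). In particular, as t varies, the locus of X₃₉ is the ellipse centered at the origin, axis-aligned with the pair, with semi-axes a(a² − b²)/(2(a² + 3b²)) and b(a² − b²)/(2(3a² + b²)). -/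
open Real

/-- The Brocard midpoint `X₃₉` of triangle `ABC`: the point with homogeneous
barycentric coordinates `α²(β² + γ²) : β²(γ² + α²) : γ²(α² + β²)`, where
`α = |B − C|, β = |C − A|, γ = |A − B|`. -/
noncomputable def X39 (A B C : EuclideanSpace ℝ (Fin 2)) : EuclideanSpace ℝ (Fin 2) :=
  let α := dist B C
  let β := dist C A
  let γ := dist A B
  let w₁ := α ^ 2 * (β ^ 2 + γ ^ 2)
  let w₂ := β ^ 2 * (γ ^ 2 + α ^ 2)
  let w₃ := γ ^ 2 * (α ^ 2 + β ^ 2)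
  (w₁ + w₂ + w₃)⁻¹ • (w₁ • A + w₂ • B + w₃ • C)

/-!
The vertices of `T(t)` lie at the angles `θₖ = t + 2πk/3` of the ellipse. The side opposite
the vertex at angle `θ` has squared length `3(A − B cos 2θ)` with `A = (a² + b²)/2`,
`B = (a² − b²)/2`, and since `cos 2θₖ` sums to zero the `X₃₉` weight of that vertex is, up to
the factor `9`, the trigonometric polynomial `(A − B cos 2θ)(2A + B cos 2θ)` of frequencies
`0, 2, 4`. Multiplied by `cos θ` or `sin θ` it has frequencies `1, 3, 5`, and summing over the
three vertices kills every frequency prime to `3` (sums of cube roots of unity vanish). Only the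
`cos 3t`, `sin 3t` terms survive, so `X₃₉` runs three times around an ellipse.
-/

open Finset

theorem dist_pt_sq (x₁ y₁ x₂ y₂ : ℝ) :
    dist (pt x₁ y₁) (pt x₂ y₂) ^ 2 = (x₁ - x₂) ^ 2 + (y₁ - y₂) ^ 2 := by
  rw [EuclideanSpace.dist_eq, sq_sqrt (by positivity)]
  simp [pt, Fin.sum_univ_two, Real.dist_eq, sq_abs]

theorem smul_pt (w x y : ℝ) : w • pt x y = pt (w * x) (w * y) := by
  ext i; fin_cases i <;> simp [pt]

theorem sum_smul_pt {ι : Type*} (s : Finset ι) (w x y : ι → ℝ) :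
    ∑ k ∈ s, w k • pt (x k) (y k) = pt (∑ k ∈ s, w k * x k) (∑ k ∈ s, w k * y k) := by
  ext i; fin_cases i <;> simp [pt]

theorem pt_eta (z : EuclideanSpace ℝ (Fin 2)) : pt (z 0) (z 1) = z := by
  ext i; fin_cases i <;> rfl

theorem X39_eq_of_dist_sq {P Q R : EuclideanSpace ℝ (Fin 2)} {c l₁ l₂ l₃ : ℝ} (hc : c ≠ 0)
    (h₁ : dist Q R ^ 2 = c * l₁) (h₂ : dist R P ^ 2 = c * l₂) (h₃ : dist P Q ^ 2 = c * l₃) :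
    X39 P Q R = (l₁ * (l₂ + l₃) + l₂ * (l₃ + l₁) + l₃ * (l₁ + l₂))⁻¹ •
      ((l₁ * (l₂ + l₃)) • P + (l₂ * (l₃ + l₁)) • Q + (l₃ * (l₁ + l₂)) • R) := by
  have hscale (x y z : ℝ) : c * x * (c * y + c * z) = c ^ 2 * (x * (y + z)) := by ring
  simp only [X39, h₁, h₂, h₃, hscale]
  rw [← mul_add, ← mul_add, mul_smul (c ^ 2), mul_smul (c ^ 2), mul_smul (c ^ 2), ← smul_add,
    ← smul_add, smul_smul, mul_inv_rev, mul_assoc, inv_mul_cancel₀ (pow_ne_zero 2 hc), mul_one]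

theorem exists_cos_sin_eq {x y : ℝ} (h : x ^ 2 + y ^ 2 = 1) : ∃ θ, cos θ = x ∧ sin θ = y := by
  have hnorm : ‖(⟨x, y⟩ : ℂ)‖ = 1 := by simp [Complex.norm_eq_sqrt_sq_add_sq, h]
  refine ⟨Complex.arg ⟨x, y⟩, ?_, ?_⟩
  · rw [Complex.cos_arg (norm_ne_zero_iff.mp (hnorm.symm ▸ one_ne_zero)), hnorm, div_one]
  · rw [Complex.sin_arg, hnorm, div_one]

theorem range_pt_cos_sin {p q : ℝ} (hp : p ≠ 0) (hq : q ≠ 0) :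
    Set.range (fun θ => pt (p * cos θ) (q * sin θ)) = ellipse p q := by
  ext z
  constructor
  · rintro ⟨θ, rfl⟩
    show (p * cos θ) ^ 2 / p ^ 2 + (q * sin θ) ^ 2 / q ^ 2 = 1
    field_simp
    exact cos_sq_add_sin_sq θ
  · intro hz
    obtain ⟨θ, hcos, hsin⟩ := exists_cos_sin_eq (x := z 0 / p) (y := z 1 / q)
      (by rw [div_pow, div_pow]; exact hz)
    exact ⟨θ, by simp only [hcos, hsin, mul_div_cancel₀ _ hp, mul_div_cancel₀ _ hq, pt_eta]⟩

theorem sum_exp_nat_mul_eq_zero {m n : ℕ} (h : ¬ m ∣ n) (t : ℝ) :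
    ∑ k ∈ range m, Complex.exp (↑(n * (t + 2 * π * k / m)) * Complex.I) = 0 := by
  rcases Nat.eq_zero_or_pos m with rfl | hm
  · simp
  set ζ := Complex.exp (2 * π * Complex.I / m)
  have hζ : IsPrimitiveRoot ζ m := Complex.isPrimitiveRoot_exp m hm.ne'
  have hterm (k : ℕ) : Complex.exp (↑(n * (t + 2 * π * k / m)) * Complex.I) =
      Complex.exp (↑(n * t) * Complex.I) * (ζ ^ n) ^ k := by
    rw [← pow_mul, ← Complex.exp_nat_mul, ← Complex.exp_add]
    congr 1
    push_cast
    field_simp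
  have hgeom : ∑ k ∈ range m, (ζ ^ n) ^ k = 0 := by
    have hne : ζ ^ n - 1 ≠ 0 := sub_ne_zero.mpr (mt (hζ.pow_eq_one_iff_dvd n).mp h)
    have h_mul := geom_sum_mul (ζ ^ n) m
    rw [← pow_mul, mul_comm n m, pow_mul, hζ.pow_eq_one, one_pow, sub_self] at h_mul
    exact (mul_eq_zero.mp h_mul).resolve_right hne
  simp_rw [hterm, ← mul_sum, hgeom, mul_zero]

theorem sum_cos_nat_mul_eq_zero {m n : ℕ} (h : ¬ m ∣ n) (t : ℝ) :
    ∑ k ∈ range m, cos (n * (t + 2 * π * k / m)) = 0 := by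
  simpa only [Complex.re_sum, Complex.exp_ofReal_mul_I_re, Complex.zero_re] using
    congrArg Complex.re (sum_exp_nat_mul_eq_zero h t)

theorem sum_sin_nat_mul_eq_zero {m n : ℕ} (h : ¬ m ∣ n) (t : ℝ) :
    ∑ k ∈ range m, sin (n * (t + 2 * π * k / m)) = 0 := by
  simpa only [Complex.im_sum, Complex.exp_ofReal_mul_I_im, Complex.zero_im] using
    congrArg Complex.im (sum_exp_nat_mul_eq_zero h t)

noncomputable def homAngle (t : ℝ) (k : ℕ) : ℝ := t + 2 * π * k / 3

theorem homP_eq (a b t : ℝ) (k : ℕ) :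
    homP a b t k = pt (a * cos (homAngle t k)) (b * sin (homAngle t k)) := rfl

theorem sum_cos_nat_mul_homAngle {n : ℕ} (h : ¬ 3 ∣ n) (t : ℝ) :
    ∑ k ∈ range 3, cos (n * homAngle t k) = 0 := by
  simpa [homAngle] using sum_cos_nat_mul_eq_zero h t

theorem sum_sin_nat_mul_homAngle {n : ℕ} (h : ¬ 3 ∣ n) (t : ℝ) :
    ∑ k ∈ range 3, sin (n * homAngle t k) = 0 := by
  simpa [homAngle] using sum_sin_nat_mul_eq_zero h t

theorem three_mul_homAngle (t : ℝ) (k : ℕ) : 3 * homAngle t k = 3 * t + k * (2 * π) := by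
  rw [homAngle]; ring

theorem homP_add_three (a b t : ℝ) (k : ℕ) : homP a b t (k + 3) = homP a b t k := by
  have h : t + 2 * π * ↑(k + 3) / 3 = t + 2 * π * k / 3 + (1 : ℕ) * (2 * π) := by
    push_cast; ring
  rw [homP, homP, h, cos_add_nat_mul_two_pi, sin_add_nat_mul_two_pi]

theorem dist_homP_sq (a b t : ℝ) (k : ℕ) :
    dist (homP a b t (k + 1)) (homP a b t (k + 2)) ^ 2
      = 3 * ((a ^ 2 + b ^ 2) / 2 - (a ^ 2 - b ^ 2) / 2 * cos (2 * homAngle t k)) := by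
  set θ := homAngle t k
  have h₁ : t + 2 * π * ↑(k + 1) / 3 = θ + 2 * π / 3 := by
    simp only [θ, homAngle]; push_cast; ring
  have h₂ : t + 2 * π * ↑(k + 2) / 3 = θ + 4 * π / 3 := by
    simp only [θ, homAngle]; push_cast; ring
  have hmid : (θ + 2 * π / 3 + (θ + 4 * π / 3)) / 2 = θ + π := by ring
  have hhalf : (θ + 2 * π / 3 - (θ + 4 * π / 3)) / 2 = -(π / 3) := by ring
  have hcos : cos (θ + 2 * π / 3) - cos (θ + 4 * π / 3) = -(√3 * sin θ) := by
    rw [cos_sub_cos, hmid, hhalf, sin_add_pi, sin_neg, sin_pi_div_three]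
    ring
  have hsin : sin (θ + 2 * π / 3) - sin (θ + 4 * π / 3) = √3 * cos θ := by
    rw [sin_sub_sin, hmid, hhalf, cos_add_pi, sin_neg, sin_pi_div_three]
    ring
  rw [homP, homP, h₁, h₂, dist_pt_sq, ← mul_sub, ← mul_sub, hcos, hsin, cos_two_mul]
  linear_combination (a ^ 2 * sin θ ^ 2 + b ^ 2 * cos θ ^ 2) * sq_sqrt (zero_le_three (α := ℝ))
    + 3 * a ^ 2 * sin_sq_add_cos_sq θ

-- With `A = (a² + b²)/2` and `B = (a² − b²)/2`, one ninth of the `X₃₉` weight of the vertex of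
-- `T(t)` at angle `θ`.
noncomputable def brocardWeight (A B θ : ℝ) : ℝ :=
  (A - B * cos (2 * θ)) * (2 * A + B * cos (2 * θ))

section BrocardWeight

variable (A B : ℝ)

theorem brocardWeight_eq (θ : ℝ) :
    brocardWeight A B θ
      = (2 * A ^ 2 - B ^ 2 / 2) - A * B * cos (2 * θ) - B ^ 2 / 2 * cos (4 * θ) := by
  have h : cos (2 * θ) ^ 2 = 1 / 2 + cos (4 * θ) / 2 := by
    rw [cos_sq, ← mul_assoc]; norm_num
  rw [brocardWeight]
  linear_combination (-B ^ 2) * h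

theorem brocardWeight_mul_cos (θ : ℝ) :
    brocardWeight A B θ * cos θ = (2 * A ^ 2 - B ^ 2 / 2 - A * B / 2) * cos θ
      - (A * B / 2 + B ^ 2 / 4) * cos (3 * θ) - B ^ 2 / 4 * cos (5 * θ) := by
  have h2 : 2 * cos (2 * θ) * cos θ = cos θ + cos (3 * θ) := by
    rw [two_mul_cos_mul_cos]; ring_nf
  have h4 : 2 * cos (4 * θ) * cos θ = cos (3 * θ) + cos (5 * θ) := by
    rw [two_mul_cos_mul_cos]; ring_nf
  rw [brocardWeight_eq]
  linear_combination (-A * B / 2) * h2 - B ^ 2 / 4 * h4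

theorem brocardWeight_mul_sin (θ : ℝ) :
    brocardWeight A B θ * sin θ = (2 * A ^ 2 - B ^ 2 / 2 + A * B / 2) * sin θ
      + (B ^ 2 / 4 - A * B / 2) * sin (3 * θ) - B ^ 2 / 4 * sin (5 * θ) := by
  have h2 : 2 * sin θ * cos (2 * θ) = sin (3 * θ) - sin θ := by
    rw [two_mul_sin_mul_cos, show θ - 2 * θ = -θ by ring, sin_neg]; ring_nf
  have h4 : 2 * sin θ * cos (4 * θ) = sin (5 * θ) - sin (3 * θ) := by
    rw [two_mul_sin_mul_cos, show θ - 4 * θ = -(3 * θ) by ring, sin_neg]; ring_nf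
  rw [brocardWeight_eq]
  linear_combination (-A * B / 2) * h2 - B ^ 2 / 4 * h4

theorem sum_brocardWeight (t : ℝ) :
    ∑ k ∈ range 3, brocardWeight A B (homAngle t k) = 3 / 2 * (2 * A - B) * (2 * A + B) := by
  have h2 : ∑ k ∈ range 3, cos (2 * homAngle t k) = 0 := by
    exact_mod_cast sum_cos_nat_mul_homAngle (n := 2) (by norm_num) t
  have h4 : ∑ k ∈ range 3, cos (4 * homAngle t k) = 0 := by
    exact_mod_cast sum_cos_nat_mul_homAngle (n := 4) (by norm_num) t
  simp only [brocardWeight_eq, sum_sub_distrib, ← mul_sum, h2, h4, sum_const, card_range]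
  ring

theorem sum_brocardWeight_mul_cos (t : ℝ) :
    ∑ k ∈ range 3, brocardWeight A B (homAngle t k) * cos (homAngle t k)
      = -(3 / 4 * B * (2 * A + B) * cos (3 * t)) := by
  have h1 : ∑ k ∈ range 3, cos (homAngle t k) = 0 := by
    simpa using sum_cos_nat_mul_homAngle (n := 1) (by norm_num) t
  have h5 : ∑ k ∈ range 3, cos (5 * homAngle t k) = 0 := by
    exact_mod_cast sum_cos_nat_mul_homAngle (n := 5) (by norm_num) t
  simp only [brocardWeight_mul_cos, sum_sub_distrib, ← mul_sum, h1, h5, three_mul_homAngle,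
    cos_add_nat_mul_two_pi, sum_const, card_range]
  ring

theorem sum_brocardWeight_mul_sin (t : ℝ) :
    ∑ k ∈ range 3, brocardWeight A B (homAngle t k) * sin (homAngle t k)
      = -(3 / 4 * B * (2 * A - B) * sin (3 * t)) := by
  have h1 : ∑ k ∈ range 3, sin (homAngle t k) = 0 := by
    simpa using sum_sin_nat_mul_homAngle (n := 1) (by norm_num) t
  have h5 : ∑ k ∈ range 3, sin (5 * homAngle t k) = 0 := by
    exact_mod_cast sum_sin_nat_mul_homAngle (n := 5) (by norm_num) t
  simp only [brocardWeight_mul_sin, sum_add_distrib, sum_sub_distrib, ← mul_sum, h1, h5,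
    three_mul_homAngle, sin_add_nat_mul_two_pi, sum_const, card_range]
  ring

end BrocardWeight

theorem X39_homP_eq_inv_smul_sum (a b t : ℝ) :
    X39 (homP a b t 0) (homP a b t 1) (homP a b t 2) =
      (∑ k ∈ range 3, brocardWeight ((a ^ 2 + b ^ 2) / 2) ((a ^ 2 - b ^ 2) / 2) (homAngle t k))⁻¹ •
        ∑ k ∈ range 3, brocardWeight ((a ^ 2 + b ^ 2) / 2) ((a ^ 2 - b ^ 2) / 2) (homAngle t k) •
          homP a b t k := by
  set A := (a ^ 2 + b ^ 2) / 2
  set B := (a ^ 2 - b ^ 2) / 2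
  obtain ⟨ℓ, hℓ⟩ : ∃ ℓ : ℕ → ℝ, ∀ k, ℓ k = A - B * cos (2 * homAngle t k) := ⟨_, fun _ => rfl⟩
  have hsum : ℓ 0 + ℓ 1 + ℓ 2 = 3 * A := by
    have h := sum_cos_nat_mul_homAngle (n := 2) (by norm_num) t
    simp only [sum_range_succ, sum_range_zero, zero_add, Nat.cast_ofNat] at h
    simp only [hℓ]
    linear_combination -B * h
  have hw (k : ℕ) : brocardWeight A B (homAngle t k) = ℓ k * (3 * A - ℓ k) := by
    rw [brocardWeight, hℓ]; ring
  have h₁ : dist (homP a b t 1) (homP a b t 2) ^ 2 = 3 * ℓ 0 := by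
    simpa [hℓ] using dist_homP_sq a b t 0
  have h₂ : dist (homP a b t 2) (homP a b t 0) ^ 2 = 3 * ℓ 1 := by
    simpa [hℓ, ← homP_add_three a b t 0] using dist_homP_sq a b t 1
  have h₃ : dist (homP a b t 0) (homP a b t 1) ^ 2 = 3 * ℓ 2 := by
    simpa [hℓ, ← homP_add_three a b t 0, ← homP_add_three a b t 1] using dist_homP_sq a b t 2
  rw [X39_eq_of_dist_sq three_ne_zero h₁ h₂ h₃]
  simp only [sum_range_succ, sum_range_zero, zero_add, hw, ← hsum]
  ring_nf

theorem X39_homP (a : ℝ) {b : ℝ} (hb : b ≠ 0) (t : ℝ) :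
    X39 (homP a b t 0) (homP a b t 1) (homP a b t 2) =
      pt (-(a * (a ^ 2 - b ^ 2) * cos (3 * t)) / (2 * (a ^ 2 + 3 * b ^ 2)))
         (-(b * (a ^ 2 - b ^ 2) * sin (3 * t)) / (2 * (3 * a ^ 2 + b ^ 2))) := by
  have hminus : 2 * ((a ^ 2 + b ^ 2) / 2) - (a ^ 2 - b ^ 2) / 2 = (a ^ 2 + 3 * b ^ 2) / 2 := by
    ring
  have hplus : 2 * ((a ^ 2 + b ^ 2) / 2) + (a ^ 2 - b ^ 2) / 2 = (3 * a ^ 2 + b ^ 2) / 2 := by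
    ring
  have hminus_ne : a ^ 2 + 3 * b ^ 2 ≠ 0 := by positivity
  have hplus_ne : 3 * a ^ 2 + b ^ 2 ≠ 0 := by positivity
  simp_rw [X39_homP_eq_inv_smul_sum, sum_brocardWeight, homP_eq, sum_smul_pt,
    mul_left_comm _ a, mul_left_comm _ b, ← mul_sum, sum_brocardWeight_mul_cos,
    sum_brocardWeight_mul_sin, smul_pt, hminus, hplus]
  congr 1 <;> field_simp <;> ring

/-- Over the homothetic Poncelet family, the Brocard midpoint `X₃₉` of `T(t)` equals
`(−a(a² − b²)cos 3t/(2(a² + 3b²)), −b(a² − b²)sin 3t/(2(3a² + b²)))`; in particular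
its locus, as `t` varies, is the concentric axis-aligned ellipse with semi-axes
`a(a² − b²)/(2(a² + 3b²))` and `b(a² − b²)/(2(3a² + b²))`. -/
theorem homothetic_X39_locus (a b : ℝ) (hab : a > b) (hb : 0 < b) :
    (∀ t : ℝ,
      X39 (homP a b t 0) (homP a b t 1) (homP a b t 2) =
        pt (-(a * (a ^ 2 - b ^ 2) * Real.cos (3 * t)) / (2 * (a ^ 2 + 3 * b ^ 2)))
           (-(b * (a ^ 2 - b ^ 2) * Real.sin (3 * t)) / (2 * (3 * a ^ 2 + b ^ 2)))) ∧
    Set.range (fun t : ℝ => X39 (homP a b t 0) (homP a b t 1) (homP a b t 2)) =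
      ellipse (a * (a ^ 2 - b ^ 2) / (2 * (a ^ 2 + 3 * b ^ 2)))
              (b * (a ^ 2 - b ^ 2) / (2 * (3 * a ^ 2 + b ^ 2))) := by
  have hX := X39_homP a hb.ne'
  refine ⟨hX, ?_⟩
  have ha : 0 < a := hb.trans hab
  have hab₂ : 0 < a ^ 2 - b ^ 2 := by nlinarith
  have hcurve : (fun t => X39 (homP a b t 0) (homP a b t 1) (homP a b t 2)) =
      (fun θ => pt (a * (a ^ 2 - b ^ 2) / (2 * (a ^ 2 + 3 * b ^ 2)) * cos θ)
        (b * (a ^ 2 - b ^ 2) / (2 * (3 * a ^ 2 + b ^ 2)) * sin θ)) ∘ (fun t => 3 * t + π) := by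
    funext t
    rw [Function.comp_apply, hX, cos_add_pi, sin_add_pi]
    congr 1 <;> ring
  have hsurj : Function.Surjective (fun t : ℝ => 3 * t + π) := fun θ => ⟨(θ - π) / 3, by ring⟩
  rw [hcurve, hsurj.range_comp, range_pt_cos_sin (by positivity) (by positivity)]
end
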